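/- Fixed-point symmetry identity for the cotangent bundle of the Grassmannian: for natural numbers v ≤ w and formal variables a₁,…,a_w, ℏ, one has ∑_{B ⊆ {1,…,w}, |B|=v} ∏_{β∈B, γ∉B} 1/((1 − a_β/a_γ)(1 − ℏ·a_γ/a_β)) = ∑_{B ⊆ {1,…,w}, |B|=v} ∏_{β∈B, γ∉B} 1/((1 − a_γ/a_β)(1 − ℏ·a_β/a_γ)), as an identity of rational functions in a₁,…,a_w, ℏ. -/
import Mathlib


noncomputable section

variable (w : ℕ)

/-- The field of rational functions `ℚ(a₁, …, a_w, ℏ)`. -/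
abbrev LocField := FractionRing (MvPolynomial (Option (Fin w)) ℚ)

/-- The variable `aᵢ` as a rational function. -/
def aVar (i : Fin w) : LocField w :=
  algebraMap (MvPolynomial (Option (Fin w)) ℚ) (LocField w) (MvPolynomial.X (some i))

/-- The variable `ℏ` as a rational function. -/
def hVar : LocField w :=
  algebraMap (MvPolynomial (Option (Fin w)) ℚ) (LocField w) (MvPolynomial.X none)

namespace GFPS

variable {F : Type*} [Field F] {ι : Type*} [DecidableEq ι]

lemma aux1 (a c d : F) (ha : a ≠ 0) : a / c * (d / a) = d / c := by
  rcases eq_or_ne c 0 with rfl | hc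
  · simp
  · field_simp

lemma aux2 (a c d : F) (hc : c ≠ 0) : a / c * (c / d) = a / d := by
  rcases eq_or_ne d 0 with rfl | hd
  · simp
  · field_simp
    try ring

lemma div_div_swap (α c d : F) (hc : c ≠ 0) (hd : d ≠ 0) : α / (c / d) = d / c * α := by
  field_simp

lemma one_sub_div_ne_zero {a b : F} (hb : b ≠ 0) (hab : a ≠ b) : 1 - a / b ≠ 0 := by
  rw [sub_ne_zero]
  intro e
  exact hab ((div_eq_one_iff_eq hb).mp e.symm)

lemma two_term (h α β : F) (hα : α ≠ 0) (hβ : β ≠ 0) (hαβ : α ≠ β)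
    (h1 : 1 - h * α ≠ 0) (h2 : 1 - h * β ≠ 0) :
    (1 - h * α)⁻¹ * (1 - h * β)⁻¹ =
      (1 - β / α)⁻¹ * (1 - h * α)⁻¹ + (1 - α / β)⁻¹ * (1 - h * β)⁻¹ := by
  have hd1 : α - β ≠ 0 := sub_ne_zero.mpr hαβ
  have hd2 : β - α ≠ 0 := sub_ne_zero.mpr (Ne.symm hαβ)
  rw [one_sub_div hα, one_sub_div hβ]
  field_simp
  ring

lemma partial_fractions {κ : Type*} [DecidableEq κ] (u : κ → F) (P : Finset κ) :
    ∀ (_ : P.Nonempty) (h : F), (∀ q ∈ P, u q ≠ 0) →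
      (∀ q ∈ P, ∀ q' ∈ P, q ≠ q' → u q ≠ u q') → (∀ q ∈ P, 1 - h * u q ≠ 0) →
      ∏ q ∈ P, (1 - h * u q)⁻¹ =
        ∑ p ∈ P, (∏ q ∈ P.erase p, (1 - u q / u p)⁻¹) * (1 - h * u p)⁻¹ := by
  induction P using Finset.cons_induction with
  | empty => intro hP; exact absurd hP (by simp)
  | cons a s ha ih =>
    intro _ h h0 hinj hden
    rcases s.eq_empty_or_nonempty with rfl | hs
    · simp
    -- memberships
    have haM : a ∈ Finset.cons a s ha := Finset.mem_cons_self a s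
    have hsM : ∀ q ∈ s, q ∈ Finset.cons a s ha := fun q hq => Finset.mem_cons_of_mem hq
    have hua : u a ≠ 0 := h0 a haM
    have h0s : ∀ q ∈ s, u q ≠ 0 := fun q hq => h0 q (hsM q hq)
    have hinjs : ∀ q ∈ s, ∀ q' ∈ s, q ≠ q' → u q ≠ u q' :=
      fun q hq q' hq' hne => hinj q (hsM q hq) q' (hsM q' hq') hne
    have hdens : ∀ q ∈ s, 1 - h * u q ≠ 0 := fun q hq => hden q (hsM q hq)
    have huas : ∀ q ∈ s, u q ≠ u a := fun q hq =>
      hinj q (hsM q hq) a haM (fun e => ha (e ▸ hq))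
    -- step 1 : peel off a and use IH
    rw [Finset.prod_cons, ih hs h h0s hinjs hdens, Finset.mul_sum]
    -- step 2 : two-term split under the sum
    have step2 : ∀ p ∈ s,
        (1 - h * u a)⁻¹ * ((∏ q ∈ s.erase p, (1 - u q / u p)⁻¹) * (1 - h * u p)⁻¹) =
          ((∏ q ∈ s.erase p, (1 - u q / u p)⁻¹) * (1 - u p / u a)⁻¹) * (1 - h * u a)⁻¹ +
          ((∏ q ∈ s.erase p, (1 - u q / u p)⁻¹) * (1 - u a / u p)⁻¹) * (1 - h * u p)⁻¹ := by
      intro p hp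
      have := two_term h (u a) (u p) hua (h0s p hp) (Ne.symm (huas p hp))
        (hden a haM) (hdens p hp)
      calc (1 - h * u a)⁻¹ * ((∏ q ∈ s.erase p, (1 - u q / u p)⁻¹) * (1 - h * u p)⁻¹)
          = (∏ q ∈ s.erase p, (1 - u q / u p)⁻¹) * ((1 - h * u a)⁻¹ * (1 - h * u p)⁻¹) := by
            ring
        _ = _ := by rw [this]; ring
    rw [Finset.sum_congr rfl step2, Finset.sum_add_distrib]
    -- step 3 : first summand collapses via IH at h = (u a)⁻¹
    have key1 : ∑ p ∈ s, ((∏ q ∈ s.erase p, (1 - u q / u p)⁻¹) * (1 - u p / u a)⁻¹) * (1 - h * u a)⁻¹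
        = ((∏ q ∈ s, (1 - u q / u a)⁻¹) * (1 - h * u a)⁻¹) := by
      rw [← Finset.sum_mul]
      congr 1
      have hd : ∀ q ∈ s, 1 - (u a)⁻¹ * u q ≠ 0 := by
        intro q hq
        rw [inv_mul_eq_div]
        exact one_sub_div_ne_zero hua (huas q hq)
      have := (ih hs (u a)⁻¹ h0s hinjs hd).symm
      calc ∑ p ∈ s, (∏ q ∈ s.erase p, (1 - u q / u p)⁻¹) * (1 - u p / u a)⁻¹
          = ∑ p ∈ s, (∏ q ∈ s.erase p, (1 - u q / u p)⁻¹) * (1 - (u a)⁻¹ * u p)⁻¹ := by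
            refine Finset.sum_congr rfl fun p hp => ?_
            rw [inv_mul_eq_div]
        _ = ∏ q ∈ s, (1 - (u a)⁻¹ * u q)⁻¹ := this
        _ = ∏ q ∈ s, (1 - u q / u a)⁻¹ := by
            refine Finset.prod_congr rfl fun q hq => ?_
            rw [inv_mul_eq_div]
    rw [key1]
    -- step 4 : match with RHS over cons
    rw [Finset.sum_cons, Finset.erase_cons]
    congr 1
    refine Finset.sum_congr rfl fun p hp => ?_
    congr 1
    have hpa : p ≠ a := fun e => ha (e ▸ hp)
    have : (Finset.cons a s ha).erase p = insert a (s.erase p) := by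
      rw [Finset.cons_eq_insert, Finset.erase_insert_of_ne hpa.symm]
    rw [this, Finset.prod_insert (fun hmem => ha (Finset.mem_of_mem_erase hmem))]
    ring

/-- The localization kernel. -/
def K (x : ι → F) (h : F) (q : ι × ι) : F :=
  ((1 - x q.1 / x q.2) * (1 - h * (x q.2 / x q.1)))⁻¹

/-- The localization sum. -/
def LL (x : ι → F) (v : ℕ) (s : Finset ι) (h : F) : F :=
  ∑ B ∈ s.powersetCard v, ∏ β ∈ B, ∏ γ ∈ s \ B, K x h (β, γ)

lemma residue_factor (x : ι → F) (Hx0 : ∀ i, x i ≠ 0)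
    (s : Finset ι) (b g : ι) (hg : g ∈ s) (hbg : b ≠ g)
    (A : Finset ι) (hA : A ⊆ (s.erase b).erase g) :
    (∏ q ∈ (insert b A) ×ˢ (s \ insert b A), (1 - x q.1 / x q.2)⁻¹) *
      (∏ q ∈ ((insert b A) ×ˢ (s \ insert b A)).erase (b, g),
        (1 - (x q.2 / x q.1) / (x g / x b))⁻¹)
    = (1 - x b / x g)⁻¹ *
      ((∏ i ∈ (s.erase b).erase g, ((1 - x b / x i) * (1 - x i / x g))⁻¹) *
        ∏ β ∈ A, ∏ γ ∈ ((s.erase b).erase g) \ A, K x (x b / x g) (β, γ)) := by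
  have hbs' : b ∉ (s.erase b).erase g := by simp
  have hgs' : g ∉ (s.erase b).erase g := by simp
  have hbA : b ∉ A := fun m => hbs' (hA m)
  have hgA : g ∉ A := fun m => hgs' (hA m)
  have hgC : g ∉ ((s.erase b).erase g) \ A := fun m => hgs' (Finset.sdiff_subset m)
  have hsB : s \ insert b A = insert g (((s.erase b).erase g) \ A) := by
    ext i
    have hib : i ∈ A → i ≠ b := fun m e => hbA (e ▸ m)
    have hgb : g ≠ b := hbg.symm
    simp only [Finset.mem_sdiff, Finset.mem_insert, Finset.mem_erase]
    constructor
    · rintro ⟨his, hnot⟩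
      push_neg at hnot
      by_cases hig : i = g
      · exact Or.inl hig
      · exact Or.inr ⟨⟨hig, hnot.1, his⟩, hnot.2⟩
    · rintro (rfl | ⟨⟨h1, h2, h3⟩, h4⟩)
      · exact ⟨hg, by push_neg; exact ⟨hgb, hgA⟩⟩
      · exact ⟨h3, by push_neg; exact ⟨h2, h4⟩⟩
  have hpP : (b, g) ∈ (insert b A) ×ˢ (s \ insert b A) := by
    rw [Finset.mem_product, hsB]
    exact ⟨Finset.mem_insert_self _ _, Finset.mem_insert_self _ _⟩
  have hdecomp : ((insert b A) ×ˢ (s \ insert b A)).erase (b, g)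
      = ({b} ×ˢ (((s.erase b).erase g) \ A)) ∪ (A ×ˢ insert g (((s.erase b).erase g) \ A)) := by
    rw [hsB]
    ext ⟨i, j⟩
    have hib : i ∈ A → i ≠ b := fun m e => hbA (e ▸ m)
    have hjg : j ∈ ((s.erase b).erase g) \ A → j ≠ g := fun m e => hgC (e ▸ m)
    simp only [Finset.mem_erase, Finset.mem_product, Finset.mem_insert, Finset.mem_union,
      Finset.mem_singleton, Prod.mk.injEq, ne_eq]
    tauto
  have hdisj : Disjoint ({b} ×ˢ (((s.erase b).erase g) \ A))
      (A ×ˢ insert g (((s.erase b).erase g) \ A)) := by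
    rw [Finset.disjoint_left]
    rintro ⟨i, j⟩ m1 m2
    rw [Finset.mem_product, Finset.mem_singleton] at m1
    rw [Finset.mem_product] at m2
    exact hbA (m1.1 ▸ m2.1)
  -- peel the (b,g) factor off the first product
  rw [← Finset.mul_prod_erase _ _ hpP]
  -- rewrite the second product's factors
  have hcp : ∀ q ∈ ((insert b A) ×ˢ (s \ insert b A)).erase (b, g),
      (1 - (x q.2 / x q.1) / (x g / x b))⁻¹ = (1 - (x b / x g) * (x q.2 / x q.1))⁻¹ := by
    intro q _
    rw [div_div_swap _ _ _ (Hx0 g) (Hx0 b)]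
  rw [Finset.prod_congr rfl hcp]
  rw [mul_assoc, ← Finset.prod_mul_distrib]
  have hK : ∀ q ∈ ((insert b A) ×ˢ (s \ insert b A)).erase (b, g),
      (1 - x q.1 / x q.2)⁻¹ * (1 - (x b / x g) * (x q.2 / x q.1))⁻¹ = K x (x b / x g) q := by
    intro q _
    rw [K, mul_inv]
  rw [Finset.prod_congr rfl hK, hdecomp, Finset.prod_union hdisj]
  have h1 : ∏ q ∈ ({b} ×ˢ (((s.erase b).erase g) \ A)), K x (x b / x g) q
      = ∏ j ∈ ((s.erase b).erase g) \ A, ((1 - x b / x j) * (1 - x j / x g))⁻¹ := by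
    rw [show ∏ q ∈ ({b} ×ˢ (((s.erase b).erase g) \ A)), K x (x b / x g) q
        = ∏ i ∈ ({b} : Finset ι), ∏ j ∈ ((s.erase b).erase g) \ A, K x (x b / x g) (i, j) from
      Finset.prod_product' ({b} : Finset ι) (((s.erase b).erase g) \ A)
        (fun i j => K x (x b / x g) (i, j)), Finset.prod_singleton]
    refine Finset.prod_congr rfl fun j _ => ?_
    rw [K]
    simp only
    rw [aux1 (x b) (x g) (x j) (Hx0 b)]
  have h2 : ∏ q ∈ (A ×ˢ insert g (((s.erase b).erase g) \ A)), K x (x b / x g) q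
      = (∏ i ∈ A, ((1 - x b / x i) * (1 - x i / x g))⁻¹) *
        ∏ β ∈ A, ∏ γ ∈ ((s.erase b).erase g) \ A, K x (x b / x g) (β, γ) := by
    rw [show ∏ q ∈ (A ×ˢ insert g (((s.erase b).erase g) \ A)), K x (x b / x g) q
        = ∏ i ∈ A, ∏ j ∈ insert g (((s.erase b).erase g) \ A), K x (x b / x g) (i, j) from
      Finset.prod_product' A (insert g (((s.erase b).erase g) \ A))
        (fun i j => K x (x b / x g) (i, j))]
    rw [Finset.prod_congr rfl fun i (_ : i ∈ A) => Finset.prod_insert hgC]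
    rw [Finset.prod_mul_distrib]
    congr 1
    refine Finset.prod_congr rfl fun i _ => ?_
    rw [K]
    simp only
    rw [aux2 (x b) (x g) (x i) (Hx0 g), mul_comm (1 - x i / x g)]
  rw [h1, h2]
  have hΦ : (∏ j ∈ ((s.erase b).erase g) \ A, ((1 - x b / x j) * (1 - x j / x g))⁻¹) *
      (∏ i ∈ A, ((1 - x b / x i) * (1 - x i / x g))⁻¹)
      = ∏ i ∈ (s.erase b).erase g, ((1 - x b / x i) * (1 - x i / x g))⁻¹ :=
    Finset.prod_sdiff hA
  rw [← hΦ]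
  ring

/-- Pole coefficient. -/
def coeff (x : ι → F) (k : ℕ) (s : Finset ι) (h : F) (p : ι × ι) : F :=
  if p.1 = p.2 then 0 else
    ((1 - x p.1 / x p.2)⁻¹ *
      ((∏ i ∈ (s.erase p.1).erase p.2, ((1 - x p.1 / x i) * (1 - x i / x p.2))⁻¹) *
        LL x (k - 1) ((s.erase p.1).erase p.2) (x p.1 / x p.2))) *
      (1 - h * (x p.2 / x p.1))⁻¹

lemma expand (x : ι → F)
    (Hx : ∀ i j k l, x i * x j = x k * x l → (i = k ∧ j = l) ∨ (i = l ∧ j = k))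
    (Hx0 : ∀ i, x i ≠ 0)
    (k : ℕ) (s : Finset ι) (h : F)
    (Hh : ∀ i ∈ s, ∀ j ∈ s, h * x j ≠ x i)
    (hk1 : 1 ≤ k) (hk2 : k < s.card) :
    LL x k s h = ∑ p ∈ s ×ˢ s, coeff x k s h p := by
  have main : ∀ B ∈ s.powersetCard k,
      (∏ β ∈ B, ∏ γ ∈ s \ B, K x h (β, γ))
        = ∑ p ∈ s ×ˢ s, (if p ∈ B ×ˢ (s \ B) then
            ((∏ q ∈ B ×ˢ (s \ B), (1 - x q.1 / x q.2)⁻¹) *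
              (∏ q ∈ (B ×ˢ (s \ B)).erase p,
                (1 - (x q.2 / x q.1) / (x p.2 / x p.1))⁻¹)) *
              (1 - h * (x p.2 / x p.1))⁻¹
          else 0) := by
    intro B hB
    rw [Finset.mem_powersetCard] at hB
    obtain ⟨hBs, hBcard⟩ := hB
    have hBne : B.Nonempty := Finset.card_pos.mp (by omega)
    have hsBne : (s \ B).Nonempty := by
      rw [← Finset.card_pos, Finset.card_sdiff_of_subset hBs]
      omega
    have hPne : (B ×ˢ (s \ B)).Nonempty := hBne.product hsBne
    have hmem : ∀ q ∈ B ×ˢ (s \ B), q.1 ∈ s ∧ q.2 ∈ s ∧ q.2 ∉ B ∧ q.1 ∈ B := by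
      intro q hq
      rw [Finset.mem_product, Finset.mem_sdiff] at hq
      exact ⟨hBs hq.1, hq.2.1, hq.2.2, hq.1⟩
    have hu0 : ∀ q ∈ B ×ˢ (s \ B), x q.2 / x q.1 ≠ 0 :=
      fun q _ => div_ne_zero (Hx0 _) (Hx0 _)
    have huinj : ∀ q ∈ B ×ˢ (s \ B), ∀ q' ∈ B ×ˢ (s \ B), q ≠ q' →
        x q.2 / x q.1 ≠ x q'.2 / x q'.1 := by
      intro q hq q' hq' hne e
      rw [div_eq_div_iff (Hx0 _) (Hx0 _)] at e
      rcases Hx q.2 q'.1 q'.2 q.1 e with ⟨e1, e2⟩ | ⟨e1, e2⟩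
      · exact hne (Prod.ext e2.symm e1)
      · exact (hmem q hq).2.2.1 (e1 ▸ (hmem q hq).2.2.2)
    have hden : ∀ q ∈ B ×ˢ (s \ B), 1 - h * (x q.2 / x q.1) ≠ 0 := by
      intro q hq e
      have e2 : h * (x q.2 / x q.1) = 1 := by linear_combination -e
      rw [← mul_div_assoc, div_eq_one_iff_eq (Hx0 q.1)] at e2
      exact Hh q.1 (hmem q hq).1 q.2 (hmem q hq).2.1 e2
    calc ∏ β ∈ B, ∏ γ ∈ s \ B, K x h (β, γ)
        = ∏ q ∈ B ×ˢ (s \ B), K x h q :=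
          (Finset.prod_product' B (s \ B) (fun β γ => K x h (β, γ))).symm
      _ = ∏ q ∈ B ×ˢ (s \ B), ((1 - x q.1 / x q.2)⁻¹ * (1 - h * (x q.2 / x q.1))⁻¹) := by
          refine Finset.prod_congr rfl fun q _ => ?_
          rw [K, mul_inv]
      _ = (∏ q ∈ B ×ˢ (s \ B), (1 - x q.1 / x q.2)⁻¹) *
            ∏ q ∈ B ×ˢ (s \ B), (1 - h * (x q.2 / x q.1))⁻¹ := Finset.prod_mul_distrib
      _ = ∑ p ∈ B ×ˢ (s \ B),
            ((∏ q ∈ B ×ˢ (s \ B), (1 - x q.1 / x q.2)⁻¹) *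
              (∏ q ∈ (B ×ˢ (s \ B)).erase p,
                (1 - (x q.2 / x q.1) / (x p.2 / x p.1))⁻¹)) *
              (1 - h * (x p.2 / x p.1))⁻¹ := by
          rw [partial_fractions (fun q : ι × ι => x q.2 / x q.1) _ hPne h hu0 huinj hden,
            Finset.mul_sum]
          refine Finset.sum_congr rfl fun p _ => ?_
          ring
      _ = _ := by
          rw [Finset.sum_ite_mem,
            Finset.inter_eq_right.mpr (Finset.product_subset_product hBs Finset.sdiff_subset)]
  rw [LL, Finset.sum_congr rfl main, Finset.sum_comm]
  refine Finset.sum_congr rfl fun p hp => ?_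
  rw [Finset.mem_product] at hp
  by_cases hbg : p.1 = p.2
  · rw [coeff, if_pos hbg]
    refine Finset.sum_eq_zero fun B _ => ?_
    rw [if_neg]
    intro m
    rw [Finset.mem_product, Finset.mem_sdiff] at m
    exact m.2.2 (hbg ▸ m.1)
  · rw [coeff, if_neg hbg, ← Finset.sum_filter]
    -- reparametrize by A = B.erase p.1
    rw [LL, Finset.mul_sum, Finset.mul_sum, Finset.sum_mul]
    have hp2s : p.2 ∈ s := hp.2
    have hp1s : p.1 ∈ s := hp.1
    have hp1s' : p.1 ∉ (s.erase p.1).erase p.2 := by simp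
    have hp2s' : p.2 ∉ (s.erase p.1).erase p.2 := by simp
    refine Finset.sum_bij' (fun B _ => B.erase p.1) (fun A _ => insert p.1 A) ?_ ?_ ?_ ?_ ?_
    · -- membership forward : B ∈ filter → erase ∈ powersetCard (k-1)
      intro B hB
      rw [Finset.mem_filter, Finset.mem_powersetCard] at hB
      obtain ⟨⟨hBs, hBcard⟩, hpB⟩ := hB
      rw [Finset.mem_product, Finset.mem_sdiff] at hpB
      rw [Finset.mem_powersetCard]
      constructor
      · intro i hi
        rw [Finset.mem_erase] at hi
        rw [Finset.mem_erase, Finset.mem_erase]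
        exact ⟨fun e => hpB.2.2 (e ▸ hi.2), hi.1, hBs hi.2⟩
      · rw [Finset.card_erase_of_mem hpB.1, hBcard]
    · -- membership backward
      intro A hA
      rw [Finset.mem_powersetCard] at hA
      obtain ⟨hAs', hAcard⟩ := hA
      have hp1A : p.1 ∉ A := fun m => hp1s' (hAs' m)
      have hp2A : p.2 ∉ A := fun m => hp2s' (hAs' m)
      rw [Finset.mem_filter, Finset.mem_powersetCard]
      refine ⟨⟨?_, ?_⟩, ?_⟩
      · intro i hi
        rcases Finset.mem_insert.mp hi with rfl | hiA
        · exact hp1s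
        · exact Finset.mem_of_mem_erase (Finset.mem_of_mem_erase (hAs' hiA))
      · rw [Finset.card_insert_of_notMem hp1A, hAcard]
        omega
      · rw [Finset.mem_product, Finset.mem_sdiff]
        exact ⟨Finset.mem_insert_self _ _, hp2s, by
          rw [Finset.mem_insert]
          push_neg
          exact ⟨fun e => hbg e.symm, hp2A⟩⟩
    · -- left inverse
      intro B hB
      rw [Finset.mem_filter] at hB
      have hpB := hB.2
      rw [Finset.mem_product] at hpB
      exact Finset.insert_erase hpB.1
    · -- right inverse
      intro A hA
      rw [Finset.mem_powersetCard] at hA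
      exact Finset.erase_insert (fun m => hp1s' (hA.1 m))
    · -- the terms match
      intro B hB
      rw [Finset.mem_filter, Finset.mem_powersetCard] at hB
      obtain ⟨⟨hBs, hBcard⟩, hpB⟩ := hB
      rw [Finset.mem_product, Finset.mem_sdiff] at hpB
      have hAs' : B.erase p.1 ⊆ (s.erase p.1).erase p.2 := by
        intro i hi
        rw [Finset.mem_erase] at hi
        rw [Finset.mem_erase, Finset.mem_erase]
        exact ⟨fun e => hpB.2.2 (e ▸ hi.2), hi.1, hBs hi.2⟩
      congr 1
      have hBA : B = insert p.1 (B.erase p.1) := (Finset.insert_erase hpB.1).symm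
      conv_lhs => rw [hBA]
      exact residue_factor x Hx0 s p.1 p.2 hp2s hbg (B.erase p.1) hAs'



lemma key (x : ι → F)
    (Hx : ∀ i j k l, x i * x j = x k * x l → (i = k ∧ j = l) ∨ (i = l ∧ j = k))
    (Hx0 : ∀ i, x i ≠ 0) :
    ∀ (v : ℕ) (s : Finset ι) (h : F), v ≤ s.card →
      (∀ i ∈ s, ∀ j ∈ s, h * x j ≠ x i) →
      LL x v s h = LL x (s.card - v) s h := by
  intro v
  induction v with
  | zero =>
    intro s h _ _
    rw [Nat.sub_zero, LL, LL, Finset.powersetCard_zero, Finset.powersetCard_self]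
    simp [Finset.sdiff_self]
  | succ v ih =>
    intro s h hv Hh
    rcases eq_or_lt_of_le hv with heq | hlt
    · rw [← heq, Nat.sub_self, LL, LL, heq, Finset.powersetCard_zero,
        Finset.powersetCard_self]
      simp [Finset.sdiff_self]
    · rw [expand x Hx Hx0 (v + 1) s h Hh (by omega) hlt,
        expand x Hx Hx0 (s.card - (v + 1)) s h Hh (by omega) (by omega)]
      refine Finset.sum_congr rfl fun p hp => ?_
      rw [Finset.mem_product] at hp
      rw [coeff, coeff]
      by_cases hbg : p.1 = p.2
      · rw [if_pos hbg, if_pos hbg]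
      · rw [if_neg hbg, if_neg hbg]
        have hp2e : p.2 ∈ s.erase p.1 := Finset.mem_erase.mpr ⟨Ne.symm hbg, hp.2⟩
        have hs'card : ((s.erase p.1).erase p.2).card = s.card - 2 := by
          rw [Finset.card_erase_of_mem hp2e, Finset.card_erase_of_mem hp.1]
          omega
        have Hh' : ∀ i ∈ (s.erase p.1).erase p.2, ∀ j ∈ (s.erase p.1).erase p.2,
            (x p.1 / x p.2) * x j ≠ x i := by
          intro i hi j hj e
          rw [div_mul_eq_mul_div, div_eq_iff (Hx0 p.2)] at e
          rcases Hx p.1 j i p.2 e with ⟨e1, _⟩ | ⟨e1, _⟩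
          · rw [Finset.mem_erase, Finset.mem_erase] at hi
            exact hi.2.1 e1.symm
          · exact hbg e1
        have := ih ((s.erase p.1).erase p.2) (x p.1 / x p.2) (by omega) Hh'
        rw [show v + 1 - 1 = v from rfl, this, hs'card,
          show s.card - 2 - v = s.card - (v + 1) - 1 by omega]

-- genericity of monomials
lemma single_add_single {σ : Type*} [DecidableEq σ] (i j k l : σ)
    (e : Finsupp.single i 1 + Finsupp.single j 1
       = Finsupp.single k 1 + Finsupp.single l 1 (M := ℕ)) :
    (i = k ∧ j = l) ∨ (i = l ∧ j = k) := by
  have em := congrArg Finsupp.toMultiset e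
  rw [Finsupp.toMultiset_add, Finsupp.toMultiset_add, Finsupp.toMultiset_single,
    Finsupp.toMultiset_single, Finsupp.toMultiset_single, Finsupp.toMultiset_single,
    one_nsmul, one_nsmul, one_nsmul, one_nsmul, Multiset.singleton_add,
    Multiset.singleton_add] at em
  rcases Multiset.cons_eq_cons.mp em with ⟨e1, e2⟩ | ⟨_, cs, e1, e2⟩
  · exact Or.inl ⟨e1, Multiset.singleton_inj.mp e2⟩
  · obtain ⟨e3, e4⟩ := (Multiset.singleton_eq_cons_iff _).mp e1
    rw [e4] at e2
    obtain ⟨e5, _⟩ := (Multiset.singleton_eq_cons_iff _).mp e2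
    exact Or.inr ⟨e5.symm, e3⟩

-- genericity
lemma emb_inj : Function.Injective
    (algebraMap (MvPolynomial (Option (Fin w)) ℚ) (LocField w)) :=
  IsFractionRing.injective _ _

lemma X_mul_X {σ : Type*} (i j : σ) :
    (MvPolynomial.X i * MvPolynomial.X j : MvPolynomial σ ℚ)
      = MvPolynomial.monomial (Finsupp.single i 1 + Finsupp.single j 1) 1 := by
  rw [MvPolynomial.X, MvPolynomial.X, MvPolynomial.monomial_mul, one_mul]

lemma Hx_holds : ∀ i j k l : Fin w, aVar w i * aVar w j = aVar w k * aVar w l →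
    (i = k ∧ j = l) ∨ (i = l ∧ j = k) := by
  intro i j k l e
  rw [aVar, aVar, aVar, aVar, ← map_mul, ← map_mul] at e
  have e2 := emb_inj w e
  rw [X_mul_X, X_mul_X] at e2
  rcases (MvPolynomial.monomial_eq_monomial_iff _ _ _ _).mp e2 with ⟨e3, _⟩ | ⟨e3, _⟩
  · rcases single_add_single _ _ _ _ e3 with ⟨a, b⟩ | ⟨a, b⟩
    · exact Or.inl ⟨Option.some_injective _ a, Option.some_injective _ b⟩
    · exact Or.inr ⟨Option.some_injective _ a, Option.some_injective _ b⟩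
  · exact absurd e3 one_ne_zero

lemma Hx0_holds : ∀ i : Fin w, aVar w i ≠ 0 := by
  intro i
  rw [aVar]
  exact (map_ne_zero_iff _ (emb_inj w)).mpr (MvPolynomial.X_ne_zero _)

lemma Hh_holds : ∀ i j : Fin w, hVar w * aVar w j ≠ aVar w i := by
  intro i j e
  rw [hVar, aVar, aVar, ← map_mul] at e
  have e2 := emb_inj w e
  rw [X_mul_X] at e2
  rcases (MvPolynomial.monomial_eq_monomial_iff _ _ _ _).mp e2 with ⟨e3, _⟩ | ⟨e3, _⟩
  · have := DFunLike.congr_fun e3 none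
    simp [Finsupp.single_apply] at this
  · exact absurd e3 one_ne_zero

end GFPS

open GFPS in
/-- Fixed-point symmetry identity for the cotangent bundle of the
Grassmannian: for `v ≤ w`,
`∑_{|B| = v} ∏_{β ∈ B, γ ∉ B} 1/((1 − a_β/a_γ)(1 − ℏ a_γ/a_β)) =
 ∑_{|B| = v} ∏_{β ∈ B, γ ∉ B} 1/((1 − a_γ/a_β)(1 − ℏ a_β/a_γ))`
as an identity of rational functions in `a₁, …, a_w, ℏ`. -/
theorem grassmannian_fixed_point_symmetry (v : ℕ) (hvw : v ≤ w) :
    ∑ B ∈ Finset.powersetCard v (Finset.univ : Finset (Fin w)),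
      ∏ β ∈ B, ∏ γ ∈ Bᶜ,
        ((1 - aVar w β / aVar w γ) * (1 - hVar w * (aVar w γ / aVar w β)))⁻¹ =
    ∑ B ∈ Finset.powersetCard v (Finset.univ : Finset (Fin w)),
      ∏ β ∈ B, ∏ γ ∈ Bᶜ,
        ((1 - aVar w γ / aVar w β) * (1 - hVar w * (aVar w β / aVar w γ)))⁻¹ := by
  have hcard : (Finset.univ : Finset (Fin w)).card = w := by
    rw [Finset.card_univ, Fintype.card_fin]
  have hL : (∑ B ∈ Finset.powersetCard v (Finset.univ : Finset (Fin w)),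
      ∏ β ∈ B, ∏ γ ∈ Bᶜ,
        ((1 - aVar w β / aVar w γ) * (1 - hVar w * (aVar w γ / aVar w β)))⁻¹)
      = LL (aVar w) v Finset.univ (hVar w) := by
    rw [LL]
    refine Finset.sum_congr rfl fun B _ => ?_
    rw [Finset.compl_eq_univ_sdiff]
    rfl
  have hR : (∑ B ∈ Finset.powersetCard v (Finset.univ : Finset (Fin w)),
      ∏ β ∈ B, ∏ γ ∈ Bᶜ,
        ((1 - aVar w γ / aVar w β) * (1 - hVar w * (aVar w β / aVar w γ)))⁻¹)
      = LL (aVar w) (w - v) Finset.univ (hVar w) := by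
    rw [LL]
    refine Finset.sum_bij' (fun B _ => Finset.univ \ B) (fun A _ => Finset.univ \ A)
      ?_ ?_ ?_ ?_ ?_
    · intro B hB
      rw [Finset.mem_powersetCard] at hB ⊢
      refine ⟨Finset.sdiff_subset, ?_⟩
      rw [Finset.card_sdiff_of_subset hB.1, hB.2, hcard]
    · intro A hA
      rw [Finset.mem_powersetCard] at hA ⊢
      refine ⟨Finset.sdiff_subset, ?_⟩
      rw [Finset.card_sdiff_of_subset hA.1, hA.2, hcard]
      omega
    · intro B _
      show Finset.univ \ (Finset.univ \ B) = B
      rw [Finset.sdiff_sdiff_self_left, Finset.univ_inter]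
    · intro A _
      show Finset.univ \ (Finset.univ \ A) = A
      rw [Finset.sdiff_sdiff_self_left, Finset.univ_inter]
    · intro B _
      rw [Finset.compl_eq_univ_sdiff]
      have : Finset.univ \ (Finset.univ \ B) = B := by
        rw [Finset.sdiff_sdiff_self_left, Finset.univ_inter]
      rw [show (∏ β ∈ Finset.univ \ B, ∏ γ ∈ Finset.univ \ (Finset.univ \ B),
          K (aVar w) (hVar w) (β, γ))
          = ∏ β ∈ Finset.univ \ B, ∏ γ ∈ B, K (aVar w) (hVar w) (β, γ) from by rw [this]]
      rw [show (∏ β ∈ B, ∏ γ ∈ Finset.univ \ B,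
          ((1 - aVar w γ / aVar w β) * (1 - hVar w * (aVar w β / aVar w γ)))⁻¹)
          = ∏ β ∈ B, ∏ γ ∈ Finset.univ \ B, K (aVar w) (hVar w) (γ, β) from rfl]
      exact Finset.prod_comm
  rw [hL, hR]
  have := key (aVar w) (Hx_holds w) (Hx0_holds w) v Finset.univ (hVar w)
    (by rw [hcard]; exact hvw) (fun i _ j _ => Hh_holds w i j)
  rw [this, hcard]

end
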